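/- arXiv:1908.02049 — 6 statements merged into one kernel-verified Lean document; each statement's English description precedes it below -/
import Mathlib

section
/- Let H be a Hopf algebra over a commutative ring k with comultiplication Δ, counit ε, and antipode S. If e = Σ e¹ ⊗ e² ∈ H ⊗ H is a Casimir element (i.e. for all a ∈ H, Σ a e¹ ⊗ e² = Σ e¹ ⊗ e² a), then t := Σ e¹ ε(e²) is a left integral in H, i.e. h·t = ε(h)·t for all h ∈ H. -/
open TensorProduct Coalgebra

lemma casimir_auxA {k H : Type*} [CommRing k] [Ring H] [Bialgebra k H] (h : H)
    (x : H ⊗[k] H) :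
    TensorProduct.rid k H (TensorProduct.map LinearMap.id (counit (R := k))
      (TensorProduct.map (LinearMap.mulLeft k h) LinearMap.id x)) =
    h * TensorProduct.rid k H (TensorProduct.map LinearMap.id (counit (R := k)) x) := by
  induction x using TensorProduct.induction_on with
  | zero => simp
  | tmul a b => simp [mul_smul_comm]
  | add a b ha hb => simp [ha, hb, mul_add]

lemma casimir_auxB {k H : Type*} [CommRing k] [Ring H] [Bialgebra k H] (h : H)
    (x : H ⊗[k] H) :
    TensorProduct.rid k H (TensorProduct.map LinearMap.id (counit (R := k))
      (TensorProduct.map LinearMap.id (LinearMap.mulRight k h) x)) =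
    counit (R := k) h •
      TensorProduct.rid k H (TensorProduct.map LinearMap.id (counit (R := k)) x) := by
  induction x using TensorProduct.induction_on with
  | zero => simp
  | tmul a b =>
    have : counit (R := k) (b * h) = counit (R := k) b * counit (R := k) h := by
      exact map_mul (Bialgebra.counitAlgHom k H) b h
    simp [this, mul_comm, mul_smul]
  | add a b ha hb => simp [ha, hb, smul_add]

/-- If `e` is a Casimir element of a bialgebra `H` over a commutative ring `k`,
then `t := (id ⊗ ε)(e)` is a left integral: `h * t = ε h • t` for all `h`. -/
theorem casimir_gives_left_integral {k H : Type*} [CommRing k] [Ring H]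
    [Bialgebra k H] (e : H ⊗[k] H)
    (hcas : ∀ a : H,
      TensorProduct.map (LinearMap.mulLeft k a) LinearMap.id e =
        TensorProduct.map LinearMap.id (LinearMap.mulRight k a) e) :
    ∀ h : H,
      h * (TensorProduct.rid k H (TensorProduct.map LinearMap.id (counit (R := k)) e)) =
        counit (R := k) h •
          (TensorProduct.rid k H (TensorProduct.map LinearMap.id (counit (R := k)) e)) := by
  intro h
  have := congrArg (fun x => TensorProduct.rid k H
    (TensorProduct.map LinearMap.id (counit (R := k)) x)) (hcas h)
  simpa [casimir_auxA, casimir_auxB] using this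
end

section
/- Let H be a Hopf algebra over a commutative ring k with invertible antipode S, and let t ∈ H be a left integral. Suppose f, g : H → k are k-linear maps such that Σ t₍₁₎ f(t₍₂₎) = 1 and Σ g(t₍₁₎) t₍₂₎ = 1. Then g = f ∘ S⁻¹. -/
/-!
For a left integral `t` one has `(S a ⊗ 1) Δt = (1 ⊗ a) Δt` for every `a`: expand
`Σ (S a₁ ⊗ 1) Δ(a₂ t)` once using `a₂ t = ε(a₂) t`, and once using `Δ(a₂ t) = Δa₂ Δt` together
with `Σ S(a₁) a₂ ⊗ a₃ = 1 ⊗ a`. Applying `g ⊗ f` followed by multiplication to this identity and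
using the normalisations of `f` and `g` gives `g (S a) = f a`, that is `g ∘ S = f`.
-/

open TensorProduct Coalgebra HopfAlgebra

lemma Coalgebra.sum_counit_right_smul {R A ι : Type*} [CommSemiring R] [AddCommMonoid A]
    [Module R A] [Coalgebra R A] {a : A} (𝓡 : Repr R a ι) :
    ∑ i ∈ 𝓡.index, counit (R := R) (𝓡.right i) • 𝓡.left i = a := by
  simpa only [map_sum, rid_tmul, one_smul] using
    congr(_root_.TensorProduct.rid R A $(sum_tmul_counit_eq 𝓡))

section Pairing

variable {R A : Type*} [CommSemiring R] [Semiring A] [Algebra R A] (f g : A →ₗ[R] R)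

lemma mul'_map_tmul_one_mul (a : A) (x : A ⊗[R] A) :
    LinearMap.mul' R R (map g f ((a ⊗ₜ 1) * x)) =
      g (a * TensorProduct.rid R A (map LinearMap.id f x)) := by
  induction x using TensorProduct.induction_on with
  | zero => simp
  | tmul b c =>
    simp only [Algebra.TensorProduct.tmul_mul_tmul, one_mul, map_tmul, LinearMap.mul'_apply,
      LinearMap.id_apply, rid_tmul, mul_smul_comm, map_smul, smul_eq_mul, mul_comm]
  | add x y hx hy => simp only [mul_add, map_add, hx, hy]

lemma mul'_map_one_tmul_mul (a : A) (x : A ⊗[R] A) :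
    LinearMap.mul' R R (map g f ((1 ⊗ₜ a) * x)) =
      f (a * TensorProduct.lid R A (map g LinearMap.id x)) := by
  induction x using TensorProduct.induction_on with
  | zero => simp
  | tmul b c =>
    simp only [Algebra.TensorProduct.tmul_mul_tmul, one_mul, map_tmul, LinearMap.mul'_apply,
      LinearMap.id_apply, lid_tmul, mul_smul_comm, map_smul, smul_eq_mul]
  | add x y hx hy => simp only [mul_add, map_add, hx, hy]

end Pairing

namespace HopfAlgebra

variable {R A ι : Type*} [CommSemiring R] [Semiring A] [HopfAlgebra R A] {a : A}

lemma sum_antipode_tmul_one_mul_comul (𝓡 : Repr R a ι) :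
    ∑ i ∈ 𝓡.index, (antipode R (𝓡.left i) ⊗ₜ[R] (1 : A)) * comul (𝓡.right i) = 1 ⊗ₜ a := by
  let Φ : A ⊗[R] (A ⊗[R] A) →ₗ[R] A ⊗[R] A :=
    (LinearMap.mul' R A ∘ₗ (antipode R).rTensor A).rTensor A ∘ₗ
      (TensorProduct.assoc R A A A).symm.toLinearMap
  have hΦ (x y z : A) : Φ (x ⊗ₜ (y ⊗ₜ z)) = (antipode R x * y) ⊗ₜ z := by simp [Φ]
  let a₁ := fun i ↦ ℛ R (𝓡.left i)
  let a₂ := fun i ↦ ℛ R (𝓡.right i)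
  calc ∑ i ∈ 𝓡.index, (antipode R (𝓡.left i) ⊗ₜ[R] (1 : A)) * comul (𝓡.right i)
      = Φ (∑ i ∈ 𝓡.index, ∑ j ∈ (a₂ i).index,
          𝓡.left i ⊗ₜ ((a₂ i).left j ⊗ₜ (a₂ i).right j)) := by
        simp only [← (a₂ _).eq, Finset.mul_sum, map_sum, Algebra.TensorProduct.tmul_mul_tmul,
          one_mul, hΦ]
    _ = Φ (∑ i ∈ 𝓡.index, ∑ j ∈ (a₁ i).index,
          (a₁ i).left j ⊗ₜ ((a₁ i).right j ⊗ₜ 𝓡.right i)) := by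
        rw [sum_tmul_tmul_eq]
    _ = ∑ i ∈ 𝓡.index,
          (∑ j ∈ (a₁ i).index, antipode R ((a₁ i).left j) * (a₁ i).right j) ⊗ₜ 𝓡.right i := by
        simp only [map_sum, hΦ, sum_tmul]
    _ = 1 ⊗ₜ a := by
        simp only [sum_antipode_mul_eq_smul, smul_tmul, ← tmul_sum, sum_counit_smul]

variable (R) in
def IsLeftIntegral (t : A) : Prop :=
  ∀ h : A, h * t = counit (R := R) h • t

lemma IsLeftIntegral.antipode_tmul_one_mul_comul {t : A} (ht : IsLeftIntegral R t) (a : A) :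
    (antipode R a ⊗ₜ[R] (1 : A)) * comul t = (1 ⊗ₜ a) * comul t := by
  let 𝓡 := ℛ R a
  let s := ∑ i ∈ 𝓡.index, (antipode R (𝓡.left i) ⊗ₜ[R] (1 : A)) * comul (𝓡.right i * t)
  have integral_side : s = (antipode R a ⊗ₜ[R] (1 : A)) * comul t :=
    calc s = ∑ i ∈ 𝓡.index,
          (antipode R (counit (R := R) (𝓡.right i) • 𝓡.left i) ⊗ₜ[R] (1 : A)) * comul t := by
          refine Finset.sum_congr rfl fun i _ ↦ ?_
          rw [ht, map_smul, mul_smul_comm, ← smul_mul_assoc, smul_tmul', ← map_smul]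
      _ = (antipode R a ⊗ₜ[R] (1 : A)) * comul t := by
          rw [← Finset.sum_mul, ← sum_tmul, ← map_sum, sum_counit_right_smul]
  have antipode_side : s = (1 ⊗ₜ a) * comul t := by
    simp only [s, Bialgebra.comul_mul, ← mul_assoc, ← Finset.sum_mul,
      sum_antipode_tmul_one_mul_comul]
  rw [← integral_side, antipode_side]

lemma IsLeftIntegral.comp_antipode_eq {t : A} {f g : A →ₗ[R] R} (ht : IsLeftIntegral R t)
    (hf : TensorProduct.rid R A (map LinearMap.id f (comul t)) = 1)
    (hg : TensorProduct.lid R A (map g LinearMap.id (comul t)) = 1) :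
    g ∘ₗ antipode R = f := by
  ext a
  have := congr(LinearMap.mul' R R (map g f $(ht.antipode_tmul_one_mul_comul a)))
  rwa [mul'_map_tmul_one_mul, mul'_map_one_tmul_mul, hf, hg, mul_one, mul_one] at this

end HopfAlgebra

theorem left_integral_functionals_antipode_general {k H : Type*} [CommRing k] [Ring H]
    [HopfAlgebra k H] (Sinv : H →ₗ[k] H)
    (hS2 : antipode (R := k) ∘ₗ Sinv = LinearMap.id)
    (t : H) (ht : ∀ h : H, h * t = counit (R := k) h • t)
    (f g : H →ₗ[k] k)
    (hf : TensorProduct.rid k H (TensorProduct.map LinearMap.id f (comul (R := k) t)) = 1)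
    (hg : TensorProduct.lid k H (TensorProduct.map g LinearMap.id (comul (R := k) t)) = 1) :
    g = f ∘ₗ Sinv := by
  rw [← IsLeftIntegral.comp_antipode_eq ht hf hg, LinearMap.comp_assoc, hS2, LinearMap.comp_id]

/-- If `t` is a left integral in a Hopf algebra `H` with invertible antipode `S` (with
inverse `Sinv`), and `f, g : H → k` satisfy `Σ t⁽¹⁾ f(t⁽²⁾) = 1` and `Σ g(t⁽¹⁾) t⁽²⁾ = 1`,
then `g = f ∘ S⁻¹`. -/
theorem left_integral_functionals_antipode {k H : Type*} [CommRing k] [Ring H]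
    [HopfAlgebra k H] (Sinv : H →ₗ[k] H)
    (hS1 : Sinv ∘ₗ antipode (R := k) = LinearMap.id)
    (hS2 : antipode (R := k) ∘ₗ Sinv = LinearMap.id)
    (t : H) (ht : ∀ h : H, h * t = counit (R := k) h • t)
    (f g : H →ₗ[k] k)
    (hf : TensorProduct.rid k H (TensorProduct.map LinearMap.id f (comul (R := k) t)) = 1)
    (hg : TensorProduct.lid k H (TensorProduct.map g LinearMap.id (comul (R := k) t)) = 1) :
    g = f ∘ₗ Sinv :=
  left_integral_functionals_antipode_general Sinv hS2 t ht f g hf hg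
end

section
/- Let A be a bialgebra over a commutative ring k which is Frobenius as an algebra with Frobenius system (e, ν). Then the map k → Int_ℓ(A) sending a ↦ a·t, where t = Σ e¹ ε(e²), is a k-module isomorphism onto the space of left integrals, with inverse given by u ↦ ν(u). In particular the space of left integrals of A is free of rank 1. -/
open TensorProduct Coalgebra

/-- For a bialgebra `A` which is Frobenius with system `(e, ν)`, the map `a ↦ a • t`
(where `t = Σ e¹ ε(e²)`) is a `k`-module isomorphism of `k` onto the space of left
integrals of `A`, with inverse `u ↦ ν u`.  In particular the left integrals form a free
`k`-module of rank 1. -/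
theorem frobenius_integral_space_free_rank_one {k A : Type*} [CommRing k] [Ring A]
    [Bialgebra k A] (e : A ⊗[k] A) (ν : A →ₗ[k] k)
    (hcas : ∀ a : A,
      TensorProduct.map (LinearMap.mulLeft k a) LinearMap.id e =
        TensorProduct.map LinearMap.id (LinearMap.mulRight k a) e)
    (hν1 : TensorProduct.lid k A (TensorProduct.map ν LinearMap.id e) = 1)
    (hν2 : TensorProduct.rid k A (TensorProduct.map LinearMap.id ν e) = 1) :
    ∀ t : A, t = TensorProduct.rid k A (TensorProduct.map LinearMap.id (counit (R := k)) e) →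
      (∀ a : k, ∀ h : A, h * (a • t) = counit (R := k) h • (a • t)) ∧
      (∀ u : A, (∀ h : A, h * u = counit (R := k) h • u) → ν u • t = u) ∧
      (∀ a : k, ν (a • t) = a) := by
  intro t ht
  -- Lemma A: multiplying outside corresponds to `mulLeft` on the first tensor factor
  have lemA : ∀ (φ : A →ₗ[k] k) (h : A) (x : A ⊗[k] A),
      h * TensorProduct.rid k A (TensorProduct.map LinearMap.id φ x) =
      TensorProduct.rid k A (TensorProduct.map LinearMap.id φ
        (TensorProduct.map (LinearMap.mulLeft k h) LinearMap.id x)) := by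
    intro φ h x
    induction x using TensorProduct.induction_on with
    | zero => simp
    | tmul a b => simp [mul_smul_comm]
    | add x y hx hy => simp [map_add, mul_add, hx, hy]
  -- Lemma B: `mulRight h` on the second factor gives a factor `counit h`
  have lemB : ∀ (h : A) (x : A ⊗[k] A),
      TensorProduct.rid k A (TensorProduct.map LinearMap.id (counit (R := k))
        (TensorProduct.map LinearMap.id (LinearMap.mulRight k h) x)) =
      counit (R := k) h •
        TensorProduct.rid k A (TensorProduct.map LinearMap.id (counit (R := k)) x) := by
    intro h x
    induction x using TensorProduct.induction_on with
    | zero => simp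
    | tmul a b =>
      simp only [TensorProduct.map_tmul, LinearMap.id_coe, id_eq,
        LinearMap.mulRight_apply, TensorProduct.rid_tmul, Bialgebra.counit_mul]
      rw [mul_comm, mul_smul]
    | add x y hx hy => simp [map_add, hx, hy, smul_add]
  have hint : ∀ h : A, h * t = counit (R := k) h • t := by
    intro h
    rw [ht, lemA, hcas, lemB]
  -- Lemma C: ν of t equals counit of the other contraction
  have lemC : ∀ x : A ⊗[k] A,
      ν (TensorProduct.rid k A (TensorProduct.map LinearMap.id (counit (R := k)) x)) =
      counit (R := k) (TensorProduct.lid k A (TensorProduct.map ν LinearMap.id x)) := by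
    intro x
    induction x using TensorProduct.induction_on with
    | zero => simp
    | tmul a b => simp [mul_comm]
    | add x y hx hy => simp [map_add, hx, hy]
  refine ⟨?_, ?_, ?_⟩
  · intro a h
    rw [mul_smul_comm, hint, smul_comm]
  · intro u hu
    have lemD : ∀ x : A ⊗[k] A,
        TensorProduct.rid k A (TensorProduct.map LinearMap.id ν
          (TensorProduct.map LinearMap.id (LinearMap.mulRight k u) x)) =
        ν u • TensorProduct.rid k A (TensorProduct.map LinearMap.id (counit (R := k)) x) := by
      intro x
      induction x using TensorProduct.induction_on with
      | zero => simp
      | tmul a b =>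
        simp only [TensorProduct.map_tmul, LinearMap.id_coe, id_eq,
          LinearMap.mulRight_apply, TensorProduct.rid_tmul]
        rw [hu b, map_smul, smul_eq_mul, mul_comm, mul_smul]
      | add x y hx hy => simp [map_add, hx, hy, smul_add]
    calc ν u • t = TensorProduct.rid k A (TensorProduct.map LinearMap.id ν
          (TensorProduct.map LinearMap.id (LinearMap.mulRight k u) e)) := by
            rw [lemD, ht]
      _ = TensorProduct.rid k A (TensorProduct.map LinearMap.id ν
          (TensorProduct.map (LinearMap.mulLeft k u) LinearMap.id e)) := by rw [hcas]
      _ = u * TensorProduct.rid k A (TensorProduct.map LinearMap.id ν e) := (lemA ν u e).symm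
      _ = u := by rw [hν2, mul_one]
  · intro a
    rw [map_smul, smul_eq_mul, ht, lemC, hν1, Bialgebra.counit_one, mul_one]
end

section
/- Let H be a finite-dimensional Hopf algebra over a field k, with left integral t, and suppose the map p : H* → H, p(f) = Σ f(t₍₁₎) t₍₂₎, is bijective. Then the map φ : H* → H defined by φ(f) = Σ f(S(t'₍₁₎)) t'₍₂₎ for the right integral t' = S(t) is an isomorphism of right H-modules, where H* carries the right H-module structure (f ↼ h)(x) = f(hx); hence H is a Frobenius algebra. -/
open TensorProduct Coalgebra HopfAlgebra

section FrobeniusHelpers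

variable {k : Type*} {H : Type*} {ι κ : Type*} [CommSemiring k] [Semiring H] [HopfAlgebra k H]

lemma sum_counit_smul' {a : H} (r : Coalgebra.Repr k a ι) :
    ∑ i ∈ r.index, counit (R := k) (r.left i) • r.right i = a := by
  have h := Coalgebra.sum_counit_tmul_eq (R := k) r
  apply_fun TensorProduct.lid k H at h
  simp only [map_sum, TensorProduct.lid_tmul, one_smul] at h
  exact h

lemma sum_smul_counit' {a : H} (r : Coalgebra.Repr k a ι) :
    ∑ i ∈ r.index, counit (R := k) (r.right i) • r.left i = a := by
  have h := Coalgebra.sum_tmul_counit_eq (R := k) r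
  apply_fun TensorProduct.rid k H at h
  simp only [map_sum, TensorProduct.rid_tmul, one_smul] at h
  exact h

/-- `Σ S(a₁) a₂ ⊗ a₃ = 1 ⊗ a`. -/
lemma lemA1' {a : H} (r : Coalgebra.Repr k a ι) (s : ∀ i : r.ι, Coalgebra.Repr k (r.right i) κ) :
    ∑ i ∈ r.index, ∑ j ∈ (s i).index,
      (antipode (R := k) (r.left i) * (s i).left j) ⊗ₜ[k] (s i).right j = (1 : H) ⊗ₜ[k] a := by
  have h := Coalgebra.sum_tmul_tmul_eq r (fun i => ℛ k (r.left i)) s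
  apply_fun ((LinearMap.mul' k H ∘ₗ LinearMap.rTensor H (antipode (R := k))).rTensor H ∘ₗ
      (TensorProduct.assoc k H H H).symm.toLinearMap) at h
  simp only [map_sum, LinearMap.comp_apply, LinearEquiv.coe_coe, TensorProduct.assoc_symm_tmul,
    LinearMap.rTensor_tmul, LinearMap.mul'_apply] at h
  rw [← h]
  have collapse : ∀ i ∈ r.index,
      ∑ j ∈ (ℛ k (r.left i)).index,
        (antipode (R := k) ((ℛ k (r.left i)).left j) * (ℛ k (r.left i)).right j) ⊗ₜ[k] r.right i
        = (1 : H) ⊗ₜ[k] (counit (R := k) (r.left i) • r.right i) := by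
    intro i _
    rw [← TensorProduct.sum_tmul, HopfAlgebra.sum_antipode_mul_eq_smul (ℛ k (r.left i)),
      TensorProduct.smul_tmul]
  rw [Finset.sum_congr rfl collapse, ← TensorProduct.tmul_sum, sum_counit_smul' r]

/-- `Σ a₁ ⊗ a₂ S(a₃) = a ⊗ 1`. -/
lemma lemA2' {a : H} (r : Coalgebra.Repr k a ι) (q : ∀ i : r.ι, Coalgebra.Repr k (r.left i) κ) :
    ∑ i ∈ r.index, ∑ j ∈ (q i).index,
      (q i).left j ⊗ₜ[k] ((q i).right j * antipode (R := k) (r.right i)) = a ⊗ₜ[k] (1 : H) := by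
  have h := Coalgebra.sum_tmul_tmul_eq r q (fun i => ℛ k (r.right i))
  apply_fun ((LinearMap.mul' k H ∘ₗ LinearMap.lTensor H (antipode (R := k))).lTensor H) at h
  simp only [map_sum, LinearMap.lTensor_tmul, LinearMap.comp_apply, LinearMap.mul'_apply] at h
  rw [h]
  have collapse : ∀ i ∈ r.index,
      ∑ j ∈ (ℛ k (r.right i)).index,
        r.left i ⊗ₜ[k] ((ℛ k (r.right i)).left j * antipode (R := k) ((ℛ k (r.right i)).right j))
        = (counit (R := k) (r.right i) • r.left i) ⊗ₜ[k] (1 : H) := by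
    intro i _
    rw [← TensorProduct.tmul_sum, HopfAlgebra.sum_mul_antipode_eq_smul (ℛ k (r.right i)),
      TensorProduct.tmul_smul, TensorProduct.smul_tmul']
  rw [Finset.sum_congr rfl collapse, ← TensorProduct.sum_tmul, sum_smul_counit' r]

/-- product of two representations. -/
noncomputable def mulRepr' {a b : H} (ra : Coalgebra.Repr k a ι) (rb : Coalgebra.Repr k b κ) :
    Coalgebra.Repr k (a * b) (ι × κ) where
  index := ra.index ×ˢ rb.index
  left p := ra.left p.1 * rb.left p.2
  right p := ra.right p.1 * rb.right p.2
  eq := by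
    rw [Bialgebra.comul_mul, ← ra.eq, ← rb.eq, Finset.sum_mul_sum, ← Finset.sum_product']
    exact Finset.sum_congr rfl fun p _ => by rw [Algebra.TensorProduct.tmul_mul_tmul]

lemma antipode_mul' (a b : H) :
    antipode (R := k) (a * b) = antipode (R := k) b * antipode (R := k) a := by
  classical
  set ra := ℛ k a with hra
  set rb := ℛ k b with hrb
  set qa : ∀ i : ra.ι, Coalgebra.Repr k (ra.left i) (H × H) := fun i => ℛ k (ra.left i) with hqa
  set qb : ∀ kk : rb.ι, Coalgebra.Repr k (rb.left kk) (H × H) := fun kk => ℛ k (rb.left kk) with hqb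
  set T : H := ∑ i ∈ ra.index, ∑ j ∈ (qa i).index, ∑ kk ∈ rb.index, ∑ l ∈ (qb kk).index,
      antipode (R := k) ((qa i).left j * (qb kk).left l) *
        (((qa i).right j * (qb kk).right l) *
          (antipode (R := k) (rb.right kk) * antipode (R := k) (ra.right i))) with hT
  -- Evaluation 1 : T = S b * S a
  have e1 : T = antipode (R := k) b * antipode (R := k) a := by
    rw [hT]
    have inner : ∀ i ∈ ra.index, ∀ kk ∈ rb.index,
        ∑ j ∈ (qa i).index, ∑ l ∈ (qb kk).index,
          antipode (R := k) ((qa i).left j * (qb kk).left l) *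
            (((qa i).right j * (qb kk).right l) *
              (antipode (R := k) (rb.right kk) * antipode (R := k) (ra.right i)))
          = (counit (R := k) (ra.left i) * counit (R := k) (rb.left kk)) •
              (antipode (R := k) (rb.right kk) * antipode (R := k) (ra.right i)) := by
      intro i _ kk _
      have hmr := HopfAlgebra.sum_antipode_mul_eq_smul (mulRepr' (qa i) (qb kk))
      simp only [mulRepr'] at hmr
      rw [Finset.sum_product] at hmr
      calc ∑ j ∈ (qa i).index, ∑ l ∈ (qb kk).index,
            antipode (R := k) ((qa i).left j * (qb kk).left l) *
              (((qa i).right j * (qb kk).right l) *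
                (antipode (R := k) (rb.right kk) * antipode (R := k) (ra.right i)))
          = (∑ j ∈ (qa i).index, ∑ l ∈ (qb kk).index,
              antipode (R := k) ((qa i).left j * (qb kk).left l) *
                ((qa i).right j * (qb kk).right l)) *
              (antipode (R := k) (rb.right kk) * antipode (R := k) (ra.right i)) := by
            simp_rw [Finset.sum_mul, mul_assoc]
        _ = _ := by
            rw [hmr, smul_mul_assoc, one_mul, ← Bialgebra.counit_mul]
    calc T = ∑ i ∈ ra.index, ∑ kk ∈ rb.index,
          (counit (R := k) (ra.left i) * counit (R := k) (rb.left kk)) •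
            (antipode (R := k) (rb.right kk) * antipode (R := k) (ra.right i)) := by
          rw [hT]
          refine Finset.sum_congr rfl fun i hi => ?_
          rw [Finset.sum_comm]
          exact Finset.sum_congr rfl fun kk hk => inner i hi kk hk
      _ = (∑ kk ∈ rb.index, counit (R := k) (rb.left kk) • antipode (R := k) (rb.right kk)) *
            (∑ i ∈ ra.index, counit (R := k) (ra.left i) • antipode (R := k) (ra.right i)) := by
          rw [Finset.sum_mul_sum, Finset.sum_comm]
          exact Finset.sum_congr rfl fun i _ => Finset.sum_congr rfl fun kk _ => by
            rw [smul_mul_smul_comm, mul_comm]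
      _ = antipode (R := k) b * antipode (R := k) a := by
          simp_rw [← map_smul, ← map_sum, sum_counit_smul']
  -- Evaluation 2 : T = S (a * b)
  have e2 : T = antipode (R := k) (a * b) := by
    have step1 : ∀ i ∈ ra.index, ∀ j ∈ (qa i).index,
        ∑ kk ∈ rb.index, ∑ l ∈ (qb kk).index,
          antipode (R := k) ((qa i).left j * (qb kk).left l) *
            (((qa i).right j * (qb kk).right l) *
              (antipode (R := k) (rb.right kk) * antipode (R := k) (ra.right i)))
          = antipode (R := k) ((qa i).left j * b) *
              ((qa i).right j * antipode (R := k) (ra.right i)) := by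
      intro i _ j _
      have h := lemA2' rb qb
      apply_fun (LinearMap.mul' k H ∘ₗ
        TensorProduct.map (antipode (R := k) ∘ₗ LinearMap.mulLeft k ((qa i).left j))
          (LinearMap.mulLeft k ((qa i).right j) ∘ₗ
            LinearMap.mulRight k (antipode (R := k) (ra.right i)))) at h
      simp only [map_sum, LinearMap.comp_apply, TensorProduct.map_tmul, LinearMap.mul'_apply,
        LinearMap.mulLeft_apply, LinearMap.mulRight_apply, one_mul] at h
      rw [← h]
      exact Finset.sum_congr rfl fun kk _ => Finset.sum_congr rfl fun l _ => by simp only [mul_assoc]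
    have step2 : ∑ i ∈ ra.index, ∑ j ∈ (qa i).index,
        antipode (R := k) ((qa i).left j * b) *
          ((qa i).right j * antipode (R := k) (ra.right i))
        = antipode (R := k) (a * b) := by
      have h := lemA2' ra qa
      apply_fun (LinearMap.mul' k H ∘ₗ
        TensorProduct.map (antipode (R := k) ∘ₗ LinearMap.mulRight k b) LinearMap.id) at h
      simp only [map_sum, LinearMap.comp_apply, TensorProduct.map_tmul, LinearMap.mul'_apply,
        LinearMap.mulRight_apply, LinearMap.id_coe, id_eq, mul_one] at h
      exact h
    rw [hT, ← step2]
    exact Finset.sum_congr rfl fun i hi => Finset.sum_congr rfl fun j hj => step1 i hi j hj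
  rw [← e2, e1]

/-- `Σ Δ(S c₁) * Δ(c₂) = ε(c) • 1` in `H ⊗ H`. -/
lemma lemL1 {c : H} (r : Coalgebra.Repr k c ι) :
    ∑ i ∈ r.index, comul (R := k) (antipode (R := k) (r.left i)) * comul (R := k) (r.right i)
      = counit (R := k) c • (1 : H ⊗[k] H) := by
  simp_rw [← Bialgebra.comul_mul]
  rw [← map_sum, HopfAlgebra.sum_antipode_mul_eq_smul r, map_smul, Bialgebra.comul_one]

/-- `Σ Δ(c₁) * (S(c₃) ⊗ S(c₂)) = ε(c) • 1` in `H ⊗ H`. -/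
lemma lemL2 {c : H} (r : Coalgebra.Repr k c ι) :
    ∑ i ∈ r.index, comul (R := k) (r.left i) *
      (TensorProduct.comm k H H) (TensorProduct.map (antipode (R := k)) (antipode (R := k))
        (comul (R := k) (r.right i)))
      = counit (R := k) c • (1 : H ⊗[k] H) := by
  classical
  set s : ∀ i : r.ι, Coalgebra.Repr k (r.right i) (H × H) := fun i => ℛ k (r.right i) with hs
  set q : ∀ i : r.ι, Coalgebra.Repr k (r.left i) (H × H) := fun i => ℛ k (r.left i) with hq
  set v : ∀ i : r.ι, ∀ j : (q i).ι, Coalgebra.Repr k ((q i).left j) (H × H) :=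
    fun i j => ℛ k ((q i).left j) with hv
  have stepA : ∑ i ∈ r.index, comul (R := k) (r.left i) *
      (TensorProduct.comm k H H) (TensorProduct.map (antipode (R := k)) (antipode (R := k))
        (comul (R := k) (r.right i)))
      = ∑ i ∈ r.index, ∑ j ∈ (s i).index, comul (R := k) (r.left i) *
          (antipode (R := k) ((s i).right j) ⊗ₜ[k] antipode (R := k) ((s i).left j)) := by
    refine Finset.sum_congr rfl fun i _ => ?_
    rw [← (s i).eq, map_sum, map_sum, Finset.mul_sum]
    exact Finset.sum_congr rfl fun j _ => by
      rw [TensorProduct.map_tmul, TensorProduct.comm_tmul]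
  have stepB : ∑ i ∈ r.index, ∑ j ∈ (s i).index, comul (R := k) (r.left i) *
        (antipode (R := k) ((s i).right j) ⊗ₜ[k] antipode (R := k) ((s i).left j))
      = ∑ i ∈ r.index, ∑ j ∈ (q i).index, comul (R := k) ((q i).left j) *
        (antipode (R := k) (r.right i) ⊗ₜ[k] antipode (R := k) ((q i).right j)) := by
    have h := Coalgebra.sum_tmul_tmul_eq r q s
    apply_fun (LinearMap.mul' k (H ⊗[k] H) ∘ₗ
      TensorProduct.map (comul (R := k))
        ((TensorProduct.comm k H H).toLinearMap ∘ₗ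
          TensorProduct.map (antipode (R := k)) (antipode (R := k)))) at h
    simp only [map_sum, LinearMap.comp_apply, TensorProduct.map_tmul, LinearEquiv.coe_coe,
      TensorProduct.comm_tmul, LinearMap.mul'_apply] at h
    exact h.symm
  have stepC : ∀ i ∈ r.index, ∑ j ∈ (q i).index, comul (R := k) ((q i).left j) *
        (antipode (R := k) (r.right i) ⊗ₜ[k] antipode (R := k) ((q i).right j))
      = (r.left i * antipode (R := k) (r.right i)) ⊗ₜ[k] (1 : H) := by
    intro i _
    have expand : ∀ j ∈ (q i).index, comul (R := k) ((q i).left j) *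
          (antipode (R := k) (r.right i) ⊗ₜ[k] antipode (R := k) ((q i).right j))
        = ∑ n ∈ (v i j).index, ((v i j).left n * antipode (R := k) (r.right i)) ⊗ₜ[k]
            ((v i j).right n * antipode (R := k) ((q i).right j)) := by
      intro j _
      rw [← (v i j).eq, Finset.sum_mul]
      exact Finset.sum_congr rfl fun n _ => by rw [Algebra.TensorProduct.tmul_mul_tmul]
    rw [Finset.sum_congr rfl expand]
    have h := lemA2' (q i) (v i)
    apply_fun (TensorProduct.map (LinearMap.mulRight k (antipode (R := k) (r.right i)))
      LinearMap.id) at h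
    simp only [map_sum, TensorProduct.map_tmul, LinearMap.mulRight_apply, LinearMap.id_coe,
      id_eq] at h
    exact h
  rw [stepA, stepB, Finset.sum_congr rfl stepC, ← TensorProduct.sum_tmul,
    HopfAlgebra.sum_mul_antipode_eq_smul r, ← TensorProduct.smul_tmul',
    Algebra.TensorProduct.one_def]

lemma comul_antipode' (c : H) :
    comul (R := k) (antipode (R := k) c) =
      (TensorProduct.comm k H H) (TensorProduct.map (antipode (R := k)) (antipode (R := k))
        (comul (R := k) c)) := by
  classical
  set r := ℛ k c with hr
  set q : ∀ i : r.ι, Coalgebra.Repr k (r.left i) (H × H) := fun i => ℛ k (r.left i) with hq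
  set s : ∀ i : r.ι, Coalgebra.Repr k (r.right i) (H × H) := fun i => ℛ k (r.right i) with hs
  set T : H ⊗[k] H := ∑ i ∈ r.index, ∑ j ∈ (q i).index,
      comul (R := k) (antipode (R := k) ((q i).left j)) *
        (comul (R := k) ((q i).right j) *
          (TensorProduct.comm k H H) (TensorProduct.map (antipode (R := k)) (antipode (R := k))
            (comul (R := k) (r.right i)))) with hT
  have eA : T = (TensorProduct.comm k H H) (TensorProduct.map (antipode (R := k))
      (antipode (R := k)) (comul (R := k) c)) := by
    have inner : ∀ i ∈ r.index, ∑ j ∈ (q i).index,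
        comul (R := k) (antipode (R := k) ((q i).left j)) *
          (comul (R := k) ((q i).right j) *
            (TensorProduct.comm k H H) (TensorProduct.map (antipode (R := k)) (antipode (R := k))
              (comul (R := k) (r.right i))))
        = counit (R := k) (r.left i) •
            (TensorProduct.comm k H H) (TensorProduct.map (antipode (R := k)) (antipode (R := k))
              (comul (R := k) (r.right i))) := by
      intro i _
      simp_rw [← mul_assoc, ← Finset.sum_mul]
      rw [lemL1 (q i), smul_mul_assoc, one_mul]
    rw [hT, Finset.sum_congr rfl inner]
    simp_rw [← map_smul, ← map_sum]
    rw [sum_counit_smul' r]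
  have eB : T = comul (R := k) (antipode (R := k) c) := by
    have h := Coalgebra.sum_tmul_tmul_eq r q s
    apply_fun (LinearMap.mul' k (H ⊗[k] H) ∘ₗ
      TensorProduct.map (comul (R := k) ∘ₗ antipode (R := k))
        (LinearMap.mul' k (H ⊗[k] H) ∘ₗ
          TensorProduct.map (comul (R := k))
            ((TensorProduct.comm k H H).toLinearMap ∘ₗ
              TensorProduct.map (antipode (R := k)) (antipode (R := k)) ∘ₗ
                comul (R := k)))) at h
    simp only [map_sum, LinearMap.comp_apply, TensorProduct.map_tmul, LinearEquiv.coe_coe,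
      LinearMap.mul'_apply] at h
    rw [hT, h]
    have inner : ∀ i ∈ r.index, ∑ j ∈ (s i).index,
        comul (R := k) (antipode (R := k) (r.left i)) *
          (comul (R := k) ((s i).left j) *
            (TensorProduct.comm k H H) (TensorProduct.map (antipode (R := k)) (antipode (R := k))
              (comul (R := k) ((s i).right j))))
        = counit (R := k) (r.right i) • comul (R := k) (antipode (R := k) (r.left i)) := by
      intro i _
      rw [← Finset.mul_sum, lemL2 (s i), mul_smul_comm, mul_one]
    rw [Finset.sum_congr rfl inner]
    simp_rw [← map_smul, ← map_sum]
    rw [sum_smul_counit' r]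
  rw [← eB, eA]

/-- For a left integral `t`: `(1 ⊗ h) Δt = (S h ⊗ 1) Δt`. -/
lemma keyI (t : H) (ht : ∀ h : H, h * t = counit (R := k) h • t) (h : H) :
    ((1 : H) ⊗ₜ[k] h) * comul (R := k) t =
      (antipode (R := k) h ⊗ₜ[k] (1 : H)) * comul (R := k) t := by
  classical
  set r := ℛ k h with hr
  set s : ∀ i : r.ι, Coalgebra.Repr k (r.right i) (H × H) := fun i => ℛ k (r.right i) with hs
  have claimN : ∑ i ∈ r.index,
      (antipode (R := k) (r.left i) ⊗ₜ[k] (1 : H)) * comul (R := k) (r.right i)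
      = (1 : H) ⊗ₜ[k] h := by
    have expand : ∀ i ∈ r.index,
        (antipode (R := k) (r.left i) ⊗ₜ[k] (1 : H)) * comul (R := k) (r.right i)
        = ∑ j ∈ (s i).index,
            (antipode (R := k) (r.left i) * (s i).left j) ⊗ₜ[k] (s i).right j := by
      intro i _
      rw [← (s i).eq, Finset.mul_sum]
      exact Finset.sum_congr rfl fun j _ => by
        rw [Algebra.TensorProduct.tmul_mul_tmul, one_mul]
    rw [Finset.sum_congr rfl expand]
    exact lemA1' r s
  calc ((1 : H) ⊗ₜ[k] h) * comul (R := k) t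
      = (∑ i ∈ r.index,
          (antipode (R := k) (r.left i) ⊗ₜ[k] (1 : H)) * comul (R := k) (r.right i)) *
          comul (R := k) t := by rw [claimN]
    _ = ∑ i ∈ r.index, (antipode (R := k) (r.left i) ⊗ₜ[k] (1 : H)) *
          (comul (R := k) (r.right i) * comul (R := k) t) := by
        rw [Finset.sum_mul]; simp_rw [mul_assoc]
    _ = ∑ i ∈ r.index, (antipode (R := k) (r.left i) ⊗ₜ[k] (1 : H)) *
          comul (R := k) (r.right i * t) := by simp_rw [Bialgebra.comul_mul]
    _ = ∑ i ∈ r.index, counit (R := k) (r.right i) •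
          ((antipode (R := k) (r.left i) ⊗ₜ[k] (1 : H)) * comul (R := k) t) := by
        simp_rw [ht, map_smul, mul_smul_comm]
    _ = (antipode (R := k) h ⊗ₜ[k] (1 : H)) * comul (R := k) t := by
        simp_rw [← smul_mul_assoc, TensorProduct.smul_tmul', ← map_smul]
        rw [← Finset.sum_mul, ← TensorProduct.sum_tmul, ← map_sum, sum_smul_counit' r]

/-- For a right integral `t'`: `Δt' (h ⊗ 1) = Δt' (1 ⊗ S h)`. -/
lemma keyII (t' : H) (ht' : ∀ h : H, t' * h = counit (R := k) h • t') (h : H) :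
    comul (R := k) t' * (h ⊗ₜ[k] (1 : H)) =
      comul (R := k) t' * ((1 : H) ⊗ₜ[k] antipode (R := k) h) := by
  classical
  set r := ℛ k h with hr
  set q : ∀ i : r.ι, Coalgebra.Repr k (r.left i) (H × H) := fun i => ℛ k (r.left i) with hq
  have claimN : ∑ i ∈ r.index,
      comul (R := k) (r.left i) * ((1 : H) ⊗ₜ[k] antipode (R := k) (r.right i))
      = h ⊗ₜ[k] (1 : H) := by
    have expand : ∀ i ∈ r.index,
        comul (R := k) (r.left i) * ((1 : H) ⊗ₜ[k] antipode (R := k) (r.right i))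
        = ∑ j ∈ (q i).index,
            (q i).left j ⊗ₜ[k] ((q i).right j * antipode (R := k) (r.right i)) := by
      intro i _
      rw [← (q i).eq, Finset.sum_mul]
      exact Finset.sum_congr rfl fun j _ => by
        rw [Algebra.TensorProduct.tmul_mul_tmul, mul_one]
    rw [Finset.sum_congr rfl expand]
    exact lemA2' r q
  calc comul (R := k) t' * (h ⊗ₜ[k] (1 : H))
      = comul (R := k) t' * ∑ i ∈ r.index,
          comul (R := k) (r.left i) * ((1 : H) ⊗ₜ[k] antipode (R := k) (r.right i)) := by
        rw [claimN]
    _ = ∑ i ∈ r.index, (comul (R := k) t' * comul (R := k) (r.left i)) *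
          ((1 : H) ⊗ₜ[k] antipode (R := k) (r.right i)) := by
        rw [Finset.mul_sum]; simp_rw [mul_assoc]
    _ = ∑ i ∈ r.index, comul (R := k) (t' * r.left i) *
          ((1 : H) ⊗ₜ[k] antipode (R := k) (r.right i)) := by simp_rw [Bialgebra.comul_mul]
    _ = ∑ i ∈ r.index, counit (R := k) (r.left i) •
          (comul (R := k) t' * ((1 : H) ⊗ₜ[k] antipode (R := k) (r.right i))) := by
        simp_rw [ht', map_smul, smul_mul_assoc]
    _ = comul (R := k) t' * ((1 : H) ⊗ₜ[k] antipode (R := k) h) := by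
        simp_rw [← mul_smul_comm, ← TensorProduct.tmul_smul, ← map_smul]
        rw [← Finset.mul_sum, ← TensorProduct.tmul_sum, ← map_sum, sum_counit_smul' r]

/-- `S t` is a right integral when `t` is a left integral. -/
lemma rightInt (t : H) (ht : ∀ h : H, h * t = counit (R := k) h • t) (h : H) :
    antipode (R := k) t * h = counit (R := k) h • antipode (R := k) t := by
  classical
  set r := ℛ k h with hr
  calc antipode (R := k) t * h
      = ∑ i ∈ r.index, counit (R := k) (r.left i) • (antipode (R := k) t * r.right i) := by
        conv_lhs => rw [← sum_counit_smul' r]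
        rw [Finset.mul_sum]; simp_rw [mul_smul_comm]
    _ = ∑ i ∈ r.index, antipode (R := k) (r.left i * t) * r.right i := by
        simp_rw [ht, map_smul, smul_mul_assoc]
    _ = ∑ i ∈ r.index, antipode (R := k) t * (antipode (R := k) (r.left i) * r.right i) := by
        simp_rw [antipode_mul', mul_assoc]
    _ = antipode (R := k) t * (counit (R := k) h • (1 : H)) := by
        rw [← Finset.mul_sum, HopfAlgebra.sum_antipode_mul_eq_smul r]
    _ = counit (R := k) h • antipode (R := k) t := by rw [mul_smul_comm, mul_one]

lemma lemMulSecond (g : H →ₗ[k] k) (h' : H) (w : H ⊗[k] H) :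
    TensorProduct.lid k H (TensorProduct.map g LinearMap.id (((1 : H) ⊗ₜ[k] h') * w)) =
      h' * TensorProduct.lid k H (TensorProduct.map g LinearMap.id w) := by
  induction w using TensorProduct.induction_on with
  | zero => simp
  | tmul a b => simp [Algebra.TensorProduct.tmul_mul_tmul, mul_smul_comm]
  | add u v hu hv => simp [mul_add, hu, hv]

lemma pairing (w : H ⊗[k] H) (f g : H →ₗ[k] k) :
    f (TensorProduct.lid k H (TensorProduct.map g LinearMap.id w)) =
      g (TensorProduct.rid k H (TensorProduct.map LinearMap.id f w)) := by
  induction w using TensorProduct.induction_on with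
  | zero => simp
  | tmul a b => simp [smul_eq_mul, mul_comm]
  | add u v hu hv => simp [hu, hv]

lemma part1compute (f : H →ₗ[k] k) (w : H ⊗[k] H) :
    TensorProduct.lid k H (TensorProduct.map (f ∘ₗ antipode (R := k)) LinearMap.id
      ((TensorProduct.comm k H H) (TensorProduct.map (antipode (R := k)) (antipode (R := k)) w)))
    = antipode (R := k) (TensorProduct.rid k H (TensorProduct.map LinearMap.id
        (f ∘ₗ antipode (R := k) ∘ₗ antipode (R := k)) w)) := by
  induction w using TensorProduct.induction_on with
  | zero => simp
  | tmul a b => simp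
  | add u v hu hv => simp only [map_add, hu, hv]

lemma part2a (f : H →ₗ[k] k) (x : H) (w : H ⊗[k] H) :
    TensorProduct.lid k H (TensorProduct.map
      ((f ∘ₗ LinearMap.mulLeft k (antipode (R := k) x)) ∘ₗ antipode (R := k)) LinearMap.id w)
    = TensorProduct.lid k H (TensorProduct.map (f ∘ₗ antipode (R := k)) LinearMap.id
        (w * (x ⊗ₜ[k] (1 : H)))) := by
  induction w using TensorProduct.induction_on with
  | zero => simp
  | tmul a b => simp [Algebra.TensorProduct.tmul_mul_tmul, antipode_mul']
  | add u v hu hv => simp only [map_add, add_mul, hu, hv]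

lemma part2b (f : H →ₗ[k] k) (h : H) (w : H ⊗[k] H) :
    TensorProduct.lid k H (TensorProduct.map (f ∘ₗ antipode (R := k)) LinearMap.id
      (w * ((1 : H) ⊗ₜ[k] h)))
    = TensorProduct.lid k H (TensorProduct.map (f ∘ₗ antipode (R := k)) LinearMap.id w) * h := by
  induction w using TensorProduct.induction_on with
  | zero => simp
  | tmul a b => simp [Algebra.TensorProduct.tmul_mul_tmul, smul_mul_assoc]
  | add u v hu hv => simp only [map_add, add_mul, hu, hv]

end FrobeniusHelpers

/-- Let `H` be a finite-dimensional Hopf algebra over a field `k`, `t` a left integral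
such that `p : H* → H`, `p f = Σ f(t⁽¹⁾) t⁽²⁾` is bijective.  Then for the right integral
`t' = S t`, the map `φ : H* → H`, `φ f = Σ f(S(t'⁽¹⁾)) t'⁽²⁾`, is an isomorphism of right
`H`-modules (where `(f ↼ h)(x) = f (h x)`); hence `H` is a Frobenius algebra. -/
theorem nonsingular_integral_gives_frobenius_iso {k H : Type*} [Field k] [Ring H]
    [HopfAlgebra k H] [FiniteDimensional k H]
    (t : H) (ht : ∀ h : H, h * t = counit (R := k) h • t)
    (hp : Function.Bijective (fun f : H →ₗ[k] k =>
      TensorProduct.lid k H (TensorProduct.map f LinearMap.id (comul (R := k) t)))) :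
    Function.Bijective (fun f : H →ₗ[k] k =>
        TensorProduct.lid k H (TensorProduct.map (f ∘ₗ antipode (R := k)) LinearMap.id
          (comul (R := k) (antipode (R := k) t)))) ∧
      ∀ (f : H →ₗ[k] k) (h : H),
        TensorProduct.lid k H (TensorProduct.map ((f ∘ₗ LinearMap.mulLeft k h) ∘ₗ antipode (R := k))
            LinearMap.id (comul (R := k) (antipode (R := k) t))) =
          TensorProduct.lid k H (TensorProduct.map (f ∘ₗ antipode (R := k)) LinearMap.id
            (comul (R := k) (antipode (R := k) t))) * h := by
  classical
  -- S is injective, hence bijective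
  have hker : ∀ x : H, antipode (R := k) x = 0 → x = 0 := by
    intro x hx
    have key := keyI t ht x
    rw [hx, TensorProduct.zero_tmul, zero_mul] at key
    obtain ⟨g, hg⟩ := hp.2 1
    have hg' : TensorProduct.lid k H (TensorProduct.map g LinearMap.id (comul (R := k) t))
        = 1 := hg
    have h2 := congrArg (fun w : H ⊗[k] H =>
      TensorProduct.lid k H (TensorProduct.map g LinearMap.id w)) key
    simp only [map_zero] at h2
    rw [lemMulSecond g x (comul (R := k) t), hg', mul_one] at h2
    exact h2
  have hSinj : Function.Injective (antipode (R := k) (A := H)) :=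
    LinearMap.ker_eq_bot.mp (LinearMap.ker_eq_bot'.mpr hker)
  have hSsurj : Function.Surjective (antipode (R := k) (A := H)) :=
    LinearMap.injective_iff_surjective.mp hSinj
  have hSbij : Function.Bijective (antipode (R := k) (A := H)) := ⟨hSinj, hSsurj⟩
  set e : H ≃ₗ[k] H := LinearEquiv.ofBijective (antipode (R := k)) hSbij with he
  have htR : ∀ h : H, antipode (R := k) t * h = counit (R := k) h • antipode (R := k) t :=
    rightInt t ht
  -- the map Q
  set Qf : (H →ₗ[k] k) → H := fun g =>
    TensorProduct.rid k H (TensorProduct.map LinearMap.id g (comul (R := k) t)) with hQf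
  let Qmap : (H →ₗ[k] k) →ₗ[k] H :=
    { toFun := Qf
      map_add' := fun f g => by
        simp only [hQf, map_add_right, LinearMap.add_apply, map_add]
      map_smul' := fun c f => by
        simp only [hQf, map_smul_right, LinearMap.smul_apply, map_smul, RingHom.id_apply] }
  have hQker : ∀ f : H →ₗ[k] k, Qf f = 0 → f = 0 := by
    intro f hf
    ext y
    obtain ⟨g, hg⟩ := hp.2 y
    have hg' : TensorProduct.lid k H (TensorProduct.map g LinearMap.id (comul (R := k) t))
        = y := hg
    have hpair := pairing (comul (R := k) t) f g
    rw [hg'] at hpair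
    rw [hpair]
    show g (Qf f) = 0
    rw [hf, map_zero]
  have hQinj : Function.Injective Qf :=
    LinearMap.ker_eq_bot.mp ((LinearMap.ker_eq_bot' (f := Qmap)).mpr hQker)
  have hfr : Module.finrank k (H →ₗ[k] k) = Module.finrank k H := Subspace.dual_finrank_eq
  have hQsurj : Function.Surjective Qf :=
    ((LinearMap.injective_iff_surjective_of_finrank_eq_finrank (f := Qmap) hfr)).mp hQinj
  have hQbij : Function.Bijective Qf := ⟨hQinj, hQsurj⟩
  -- the precomposition map T
  set Tf : (H →ₗ[k] k) → (H →ₗ[k] k) :=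
    fun f => f ∘ₗ antipode (R := k) ∘ₗ antipode (R := k) with hTf
  have hes : ∀ y : H, antipode (R := k) (e.symm y) = y := fun y => e.apply_symm_apply y
  have hse : ∀ y : H, e.symm (antipode (R := k) y) = y := fun y => e.symm_apply_apply y
  have hTbij : Function.Bijective Tf := by
    refine Function.bijective_iff_has_inverse.mpr
      ⟨fun g => g ∘ₗ e.symm.toLinearMap ∘ₗ e.symm.toLinearMap, fun f => ?_, fun g => ?_⟩
    · ext x
      simp [hTf, hes, hse]
    · ext x
      simp [hTf, hes, hse]
  constructor
  · -- bijectivity of φ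
    have hfun : (fun f : H →ₗ[k] k =>
        TensorProduct.lid k H (TensorProduct.map (f ∘ₗ antipode (R := k)) LinearMap.id
          (comul (R := k) (antipode (R := k) t))))
        = fun f => antipode (R := k) (Qf (Tf f)) := by
      funext f
      rw [comul_antipode' t]
      exact part1compute f (comul (R := k) t)
    rw [hfun]
    exact hSbij.comp (hQbij.comp hTbij)
  · -- module map property
    intro f h
    have hxe : antipode (R := k) (e.symm h) = h := hes h
    rw [← hxe, part2a f (e.symm h) (comul (R := k) (antipode (R := k) t)),
      keyII (antipode (R := k) t) htR (e.symm h),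
      part2b f (antipode (R := k) (e.symm h)) (comul (R := k) (antipode (R := k) t))]
end

section
/- Let A be a bialgebra over a commutative ring k, finitely generated projective as a k-module, possessing a left integral t such that the map q : A* → A, q(f) = Σ t₍₁₎ f(t₍₂₎), is a split epimorphism with splitting q̄. Then A has a right antipode: defining f₀ : A → k by f₀(a) = q̄(1)(a), the map S(a) := Σ t₍₁₎ f₀(a t₍₂₎) satisfies Σ a₍₁₎ S(a₍₂₎) = ε(a) 1 for all a ∈ A. -/
open TensorProduct Coalgebra

/-- Let `A` be a bialgebra, finitely generated projective over `k`, with a left integral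
`t` such that `q : A* → A`, `q f = Σ t⁽¹⁾ f(t⁽²⁾)`, is a split epimorphism with splitting
`q̄`.  Setting `f₀ := q̄ 1`, the map `S a := Σ t⁽¹⁾ f₀(a t⁽²⁾)` is a right antipode:
`Σ a⁽¹⁾ S(a⁽²⁾) = ε a • 1` for all `a`. -/
theorem split_nonsingular_integral_gives_right_antipode {k A : Type*} [CommRing k] [Ring A]
    [Bialgebra k A] [Module.Finite k A] [Module.Projective k A]
    (t : A) (ht : ∀ h : A, h * t = counit (R := k) h • t)
    (qbar : A →ₗ[k] (A →ₗ[k] k))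
    (hq : ∀ a : A,
      TensorProduct.rid k A (TensorProduct.map LinearMap.id (qbar a) (comul (R := k) t)) = a) :
    ∃ S : A →ₗ[k] A,
      (∀ a : A, S a = TensorProduct.rid k A
        (TensorProduct.map LinearMap.id ((qbar 1) ∘ₗ LinearMap.mulLeft k a)
          (comul (R := k) t))) ∧
      ∀ a : A, LinearMap.mul' k A (TensorProduct.map LinearMap.id S (comul (R := k) a)) =
        counit (R := k) a • (1 : A) := by
  set f₀ : A →ₗ[k] k := qbar 1 with hf₀
  set S : A →ₗ[k] A :=
    (TensorProduct.rid k A).toLinearMap ∘ₗ TensorProduct.map LinearMap.id f₀ ∘ₗ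
      LinearMap.mulRight k (comul (R := k) t) ∘ₗ TensorProduct.mk k A A 1 with hS
  have hSapply : ∀ a : A, S a = TensorProduct.rid k A
      (TensorProduct.map LinearMap.id ((qbar 1) ∘ₗ LinearMap.mulLeft k a)
        (comul (R := k) t)) := by
    intro a
    have key : ∀ x : A ⊗[k] A,
        TensorProduct.rid k A (TensorProduct.map LinearMap.id f₀ ((1 ⊗ₜ[k] a) * x)) =
        TensorProduct.rid k A
          (TensorProduct.map LinearMap.id (f₀ ∘ₗ LinearMap.mulLeft k a) x) := by
      intro x
      induction x using TensorProduct.induction_on with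
      | zero => simp
      | tmul y z => simp [Algebra.TensorProduct.tmul_mul_tmul]
      | add x y hx hy => simp [mul_add, map_add, hx, hy]
    have h2 := key (comul (R := k) t)
    rw [hS]
    simp only [LinearMap.coe_comp, LinearEquiv.coe_coe, Function.comp_apply,
      TensorProduct.mk_apply, LinearMap.mulRight_apply]
    exact h2
  refine ⟨S, hSapply, fun a => ?_⟩
  have key : ∀ x : A ⊗[k] A,
      LinearMap.mul' k A (TensorProduct.map LinearMap.id S x) =
      TensorProduct.rid k A (TensorProduct.map LinearMap.id f₀ (x * comul (R := k) t)) := by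
    intro x
    induction x using TensorProduct.induction_on with
    | zero => simp
    | tmul y z =>
      have inner : ∀ w : A ⊗[k] A,
          y * TensorProduct.rid k A (TensorProduct.map LinearMap.id f₀ w) =
          TensorProduct.rid k A
            (TensorProduct.map LinearMap.id f₀ ((y ⊗ₜ[k] (1:A)) * w)) := by
        intro w
        induction w using TensorProduct.induction_on with
        | zero => simp
        | tmul u v =>
          simp [Algebra.TensorProduct.tmul_mul_tmul, mul_smul_comm]
        | add u v hu hv => simp [mul_add, map_add, hu, hv, left_distrib]
      have : S z = TensorProduct.rid k A
          (TensorProduct.map LinearMap.id f₀ ((1 ⊗ₜ[k] z) * comul (R := k) t)) := by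
        simp [hS]
      rw [TensorProduct.map_tmul, LinearMap.mul'_apply, LinearMap.id_apply, this,
        inner, ← mul_assoc, Algebra.TensorProduct.tmul_mul_tmul, one_mul, mul_one]
    | add x y hx hy => simp [add_mul, map_add, hx, hy]
  have hcm : comul (R := k) a * comul (R := k) t = comul (R := k) (a * t) :=
    (map_mul (Bialgebra.comulAlgHom k A) a t).symm
  rw [key, hcm, ht a, map_smul, map_smul, map_smul]
  rw [show TensorProduct.rid k A
      (TensorProduct.map LinearMap.id f₀ (comul (R := k) t)) = 1 from hq 1]
end

section
/- Let A be a bialgebra over a commutative ring k such that every finitely generated projective k-module is free, and assume A is finitely generated projective over k. If A admits a right antipode S (i.e. Σ a₍₁₎ S(a₍₂₎) = ε(a) 1 for all a), then S is also a left antipode (i.e. Σ S(a₍₁₎) a₍₂₎ = ε(a) 1), so A is a Hopf algebra. -/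
/-!
`S` is a right inverse of `id` in the convolution algebra `End_k(A)`, which is a finite
`k`-module since `A` is finite free. In an algebra that is finite over a commutative ring,
one-sided inverses are two-sided: if `x * y = 1`, left multiplication by `x` is a surjective
`k`-linear endomorphism of a finite module, hence injective (Orzech), and it sends both
`y * x` and `1` to `x`.
-/

open TensorProduct Coalgebra WithConv

universe u

instance WithConv.moduleFinite {R M : Type*} [Semiring R] [AddCommMonoid M] [Module R M]
    [Module.Finite R M] : Module.Finite R (WithConv M) :=
  .equiv (WithConv.linearEquiv R M).symm

theorem Module.Finite.isDedekindFiniteMonoid (k R : Type*) [CommRing k] [Ring R]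
    [Algebra k R] [Module.Finite k R] : IsDedekindFiniteMonoid R where
  mul_eq_one_symm {x y} hxy := by
    have hsurj : Function.Surjective (LinearMap.mulLeft k x) := fun z =>
      ⟨y * z, by rw [LinearMap.mulLeft_apply, ← mul_assoc, hxy, one_mul]⟩
    apply OrzechProperty.injective_of_surjective_endomorphism _ hsurj
    rw [LinearMap.mulLeft_apply, LinearMap.mulLeft_apply, ← mul_assoc, hxy, one_mul, mul_one]

/-- Over a commutative ring `k` for which every finitely generated projective module is
free, any right antipode on a finitely generated projective bialgebra `A` is also a left
antipode, so `A` is a Hopf algebra. -/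
theorem right_antipode_is_left_antipode {k A : Type u} [CommRing k] [Ring A]
    [Bialgebra k A]
    (hfree : ∀ (M : Type u) [AddCommGroup M] [Module k M],
      Module.Finite k M → Module.Projective k M → Module.Free k M)
    [Module.Finite k A] [Module.Projective k A]
    (S : A →ₗ[k] A)
    (hS : ∀ a : A, LinearMap.mul' k A (TensorProduct.map LinearMap.id S (comul (R := k) a)) =
      counit (R := k) a • (1 : A)) :
    ∀ a : A, LinearMap.mul' k A (TensorProduct.map S LinearMap.id (comul (R := k) a)) =
      counit (R := k) a • (1 : A) := by
  have : Module.Free k A := hfree A ‹_› ‹_›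
  have := Module.Finite.isDedekindFiniteMonoid k (WithConv (A →ₗ[k] A))
  have hright : toConv LinearMap.id * toConv S = (1 : WithConv (A →ₗ[k] A)) := by
    ext a
    simpa [Algebra.algebraMap_eq_smul_one] using hS a
  intro a
  simpa [Algebra.algebraMap_eq_smul_one] using congr($(mul_eq_one_symm hright) a)
end
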